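/- The graph G = G(Q,S) has no P_5-witness structure W with W(p_1) = {q*} and W(p_5) = {w}. -/
import Mathlib


/-- `W` is an `H`-witness structure of `G`: a family of pairwise disjoint nonempty
connected subsets of `V(G)` covering `V(G)` such that distinct `h₁ h₂` are adjacent in `H`
iff there is an edge of `G` between `W h₁` and `W h₂`. -/
def IsWitnessStructure {V U : Type*} (G : SimpleGraph V) (H : SimpleGraph U)
    (W : U → Set V) : Prop :=
  (∀ h, (W h).Nonempty) ∧
  (∀ h₁ h₂, h₁ ≠ h₂ → Disjoint (W h₁) (W h₂)) ∧
  (⋃ h, W h) = Set.univ ∧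
  (∀ h, (G.induce (W h)).Connected) ∧
  (∀ h₁ h₂, h₁ ≠ h₂ → ((∃ a ∈ W h₁, ∃ b ∈ W h₂, G.Adj a b) ↔ H.Adj h₁ h₂))

/-- `G` contains `H` as a contraction. -/
def ContainsAsContraction {V U : Type*} (G : SimpleGraph V) (H : SimpleGraph U) : Prop :=
  ∃ W : U → Set V, IsWitnessStructure G H W

/-- Raw vertex names for the graph `G(Q,S)`: elements `q_i`, hyperedges `S_j`,
copies `S_j'`, subdivision vertices `q^i_j`, and special vertices `q*`, `u₁`, `u₂`, `v`, `w`. -/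
inductive HVertex (m n : ℕ) : Type
  | elt : Fin m → HVertex m n
  | hyp : Fin n → HVertex m n
  | copy : Fin n → HVertex m n
  | sub : Fin m → Fin n → HVertex m n
  | qstar : HVertex m n
  | u1 : HVertex m n
  | u2 : HVertex m n
  | v : HVertex m n
  | w : HVertex m n

/-- A raw vertex name is an actual vertex of `G(Q,S)`: the subdivision vertex `q^i_j`
exists only when `q_i ∈ S_j`. -/
def HVertex.OK {m n : ℕ} (S : Fin n → Set (Fin m)) : HVertex m n → Prop
  | .sub i j => i ∈ S j
  | _ => True

/-- The vertex set of `G(Q,S)`. -/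
def GVertex {m n : ℕ} (S : Fin n → Set (Fin m)) : Type := {x : HVertex m n // x.OK S}

/-- The (asymmetrically listed) edges of `G(Q,S)`:
`q^i_j q_i`, `q^i_j S_j`, `q_i S_j'` (for `q_i ∈ S_j`), `S_j S_k'` (all `j,k`),
`q* u₁`, `q* u₂`, `q* q^i_j`, `u₁ S_j`, `u₂ S_j`, `u₁ v`, `u₂ v`, `w S_j'`. -/
def baseAdj {m n : ℕ} (S : Fin n → Set (Fin m)) : HVertex m n → HVertex m n → Prop
  | .sub i _, .elt i' => i = i'
  | .sub _ j, .hyp j' => j = j'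
  | .elt i, .copy j => i ∈ S j
  | .hyp _, .copy _ => True
  | .qstar, .u1 => True
  | .qstar, .u2 => True
  | .qstar, .sub _ _ => True
  | .u1, .hyp _ => True
  | .u2, .hyp _ => True
  | .u1, .v => True
  | .u2, .v => True
  | .w, .copy _ => True
  | _, _ => False

/-- The graph `G = G(Q,S)`. -/
def GQS {m n : ℕ} (S : Fin n → Set (Fin m)) : SimpleGraph (GVertex S) :=
  SimpleGraph.fromRel (fun a b => baseAdj S a.1 b.1)

theorem stmt_11 {m n : ℕ} (S : Fin n → Set (Fin m)) (hn : 2 ≤ n)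
    (hSne : ∀ j, (S j).Nonempty) (hSlast : S ⟨n - 1, by omega⟩ = Set.univ) :
    ¬ ∃ W : Fin 5 → Set (GVertex S),
        IsWitnessStructure (GQS S) (SimpleGraph.pathGraph 5) W ∧
        W 0 = {(⟨.qstar, trivial⟩ : GVertex S)} ∧
        W 4 = {(⟨.w, trivial⟩ : GVertex S)} := by
  rintro ⟨W, ⟨hne, hdisj, hcover, hconn, hadj⟩, hW0, hW4⟩
  set vq : GVertex S := ⟨.qstar, trivial⟩ with hvq
  set vw : GVertex S := ⟨.w, trivial⟩ with hvw
  have huniq : ∀ (x : GVertex S) (k l : Fin 5), x ∈ W k → x ∈ W l → k = l := by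
    intro x k l hk hl
    by_contra h
    exact Set.disjoint_left.mp (hdisj k l h) hk hl
  have hmem : ∀ x : GVertex S, ∃ k, x ∈ W k := by
    intro x
    have : x ∈ ⋃ h, W h := hcover ▸ Set.mem_univ x
    simpa using this
  have hvqmem : vq ∈ W 0 := by rw [hW0]; rfl
  have hvwmem : vw ∈ W 4 := by rw [hW4]; rfl
  -- neighbors of qstar are in W 1
  have hnbr0 : ∀ x : GVertex S, (GQS S).Adj vq x → x ∈ W 1 := by
    intro x hx
    obtain ⟨k, hk⟩ := hmem x
    by_cases h0 : k = 0
    · subst h0; rw [hW0] at hk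
      have : x = vq := hk
      rw [this] at hx
      exact absurd hx (GQS S).irrefl
    · have hp := (hadj 0 k (Ne.symm h0)).mp ⟨vq, hvqmem, x, hk, hx⟩
      rw [SimpleGraph.pathGraph_adj] at hp
      have e0 : ((0 : Fin 5) : ℕ) = 0 := rfl
      have : k = 1 := by
        rw [e0] at hp
        apply Fin.ext
        show (k : ℕ) = 1
        omega
      exact this ▸ hk
  -- neighbors of w are in W 3
  have hnbr4 : ∀ x : GVertex S, (GQS S).Adj vw x → x ∈ W 3 := by
    intro x hx
    obtain ⟨k, hk⟩ := hmem x
    by_cases h4 : k = 4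
    · subst h4; rw [hW4] at hk
      have : x = vw := hk
      rw [this] at hx
      exact absurd hx (GQS S).irrefl
    · have hp := (hadj 4 k (Ne.symm h4)).mp ⟨vw, hvwmem, x, hk, hx⟩
      rw [SimpleGraph.pathGraph_adj] at hp
      have e4 : ((4 : Fin 5) : ℕ) = 4 := rfl
      have hk5 := k.isLt
      have : k = 3 := by
        rw [e4] at hp
        apply Fin.ext
        show (k : ℕ) = 3
        omega
      exact this ▸ hk
  have hneS : ∀ (a b : GVertex S), (a.1 = b.1 → False) → a ≠ b :=
    fun a b h hab => h (congrArg Subtype.val hab)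
  -- basic adjacency builder
  have mkadj : ∀ (a b : GVertex S), (a.1 = b.1 → False) → baseAdj S a.1 b.1 →
      (GQS S).Adj a b := by
    intro a b h hb
    exact ⟨hneS a b h, Or.inl hb⟩
  -- u1 ∈ W 1
  have hu1 : (⟨.u1, trivial⟩ : GVertex S) ∈ W 1 :=
    hnbr0 _ (mkadj _ _ (fun h => by cases h) trivial)
  -- every copy is in W 3
  have hcopy : ∀ j : Fin n, (⟨.copy j, trivial⟩ : GVertex S) ∈ W 3 := by
    intro j
    exact hnbr4 _ (mkadj _ _ (fun h => by cases h) trivial)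
  -- no edge between W 3 and W 1
  have h31 : ∀ (a b : GVertex S), a ∈ W 3 → b ∈ W 1 → ¬ (GQS S).Adj a b := by
    intro a b ha hb hab
    have hp := (hadj 3 1 (by decide)).mp ⟨a, ha, b, hb, hab⟩
    rw [SimpleGraph.pathGraph_adj] at hp
    exact absurd hp (by decide)
  -- the last hyperedge index
  have hnpos : 0 < n := by omega
  set jn : Fin n := ⟨n - 1, by omega⟩ with hjn
  -- every element of W 3 is a copy vertex
  have hW3copy : ∀ x : GVertex S, x ∈ W 3 → ∃ j : Fin n, x = ⟨.copy j, trivial⟩ := by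
    rintro ⟨x, hok⟩ hx3
    cases x with
    | elt i =>
      -- adjacent to sub i jn which is in W 1
      have hiS : i ∈ S jn := by rw [hjn, hSlast]; trivial
      have hsub1 : (⟨.sub i jn, hiS⟩ : GVertex S) ∈ W 1 :=
        hnbr0 _ (mkadj _ _ (fun h => by cases h) trivial)
      exact absurd (mkadj (⟨.sub i jn, hiS⟩) ⟨.elt i, hok⟩ (fun h => by cases h) rfl).symm
        (h31 _ _ hx3 hsub1)
    | hyp j =>
      exact absurd (mkadj (⟨.u1, trivial⟩) ⟨.hyp j, hok⟩ (fun h => by cases h) trivial).symm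
        (h31 _ _ hx3 hu1)
    | copy j => exact ⟨j, rfl⟩
    | sub i j =>
      have hs1 : (⟨.sub i j, hok⟩ : GVertex S) ∈ W 1 :=
        hnbr0 _ (mkadj _ _ (fun h => by cases h) trivial)
      exact absurd (huniq _ _ _ hx3 hs1) (by decide)
    | qstar =>
      have : (⟨.qstar, hok⟩ : GVertex S) = vq := rfl
      exact absurd (huniq _ _ _ hx3 (this ▸ hvqmem)) (by decide)
    | u1 => exact absurd (huniq _ _ _ hx3 hu1) (by decide)
    | u2 =>
      have h2 : (⟨.u2, hok⟩ : GVertex S) ∈ W 1 :=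
        hnbr0 _ (mkadj _ _ (fun h => by cases h) trivial)
      exact absurd (huniq _ _ _ hx3 h2) (by decide)
    | v =>
      exact absurd (mkadj (⟨.u1, trivial⟩) ⟨.v, hok⟩ (fun h => by cases h) trivial).symm
        (h31 _ _ hx3 hu1)
    | w =>
      have : (⟨.w, hok⟩ : GVertex S) = vw := rfl
      exact absurd (huniq _ _ _ hx3 (this ▸ hvwmem)) (by decide)
  -- W 3 induces an edgeless graph
  have hbot : (GQS S).induce (W 3) = ⊥ := by
    ext a b
    simp only [SimpleGraph.comap_adj, SimpleGraph.bot_adj, iff_false]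
    intro hab
    obtain ⟨j1, hj1⟩ := hW3copy a.1 a.2
    obtain ⟨j2, hj2⟩ := hW3copy b.1 b.2
    have hab' : (GQS S).Adj (⟨.copy j1, trivial⟩ : GVertex S) ⟨.copy j2, trivial⟩ := by
      rw [← hj1, ← hj2]; exact hab
    rcases hab' with ⟨-, h | h⟩ <;> exact h
  have hc := hconn 3
  rw [hbot] at hc
  have h0 : (⟨.copy ⟨0, hnpos⟩, trivial⟩ : GVertex S) ∈ W 3 := hcopy _
  have h1 : (⟨.copy ⟨1, by omega⟩, trivial⟩ : GVertex S) ∈ W 3 := hcopy _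
  have heq := SimpleGraph.reachable_bot.mp (hc.preconnected ⟨_, h0⟩ ⟨_, h1⟩)
  have h2 := congrArg Subtype.val (congrArg Subtype.val heq)
  simp only [HVertex.copy.injEq, Fin.mk.injEq] at h2
  omega
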